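/- Let τ and τ' be two distinguishable tangles in a graph G, and let k be the minimum order of a separation of G distinguishing τ and τ'. Then the set β(τ,τ') of all separations of G that efficiently distinguish τ and τ' is a bottleneck of order k in G. -/

import Mathlib

/-!
An efficient distinguisher `(A, B)`, oriented so that `(A, B) ∈ τ` and `(B, A) ∈ τ'`, is tight:
otherwise the neighbourhood of every component of `G - X` inside `A`, where `X = A ∩ B`, misses
some `x ∈ X`, and the union `U_x` of the components missing `x` has fewer than `k` neighbours.
Both tangles orient the separation `(U_x ∪ N(U_x), V ∖ U_x)` away from `U_x` (`τ` by consistency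
with `(A, B)`, `τ'` by the minimality of `k`), and a tangle orienting two such regions away also
orients their union away. So `τ'` orients `A ∖ B = ⋃ₓ U_x` away, contradicting `(B, A) ∈ τ'`.

For a ⊤-star whose base is oriented as `(A₀, B₀) ∈ τ`, the small sides `A_i` cover `G`, so `τ`
orients some other constituent as `(B_j, A_j)`; since `A₀ ⊆ B_j`, the tangle `τ'`, which contains
`(B₀, A₀)`, cannot do the same, so `{A_j, B_j}` distinguishes the tangles with order `≤ k`.
-/

namespace LS

open SimpleGraph

variable {V : Type*}

/-- `(A, B)` is an (oriented) separation of `G`: the two sides cover `V`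
and there is no edge between `A ∖ B` and `B ∖ A`. -/
def IsSep (G : SimpleGraph V) (A B : Set V) : Prop :=
  A ∪ B = Set.univ ∧ ∀ a ∈ A \ B, ∀ b ∈ B \ A, ¬G.Adj a b

/-- `(A,B) ≥ (C,D)` for oriented separations, i.e. `A ⊆ C` and `B ⊇ D`. -/
def SepGE (s t : Set V × Set V) : Prop := s.1 ⊆ t.1 ∧ t.2 ⊆ s.2

/-- Two (unoriented) separations are nested if they have `≥`-comparable orientations. -/
def Nested (s t : Set V × Set V) : Prop :=
  SepGE s t ∨ SepGE s (t.2, t.1) ∨ SepGE (s.2, s.1) t ∨ SepGE (s.2, s.1) (t.2, t.1)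

/-- Two separations cross if they are not nested. -/
def Crosses (s t : Set V × Set V) : Prop := ¬Nested s t

/-- The neighbourhood `N_G(K)` of a vertex set `K`. -/
def nbhdSet (G : SimpleGraph V) (K : Set V) : Set V :=
  {v | v ∉ K ∧ ∃ u ∈ K, G.Adj u v}

/-- `K` is (the vertex set of) a connected component of the subgraph of `G` induced on `S`. -/
def IsCompOf (G : SimpleGraph V) (K S : Set V) : Prop :=
  K.Nonempty ∧ K ⊆ S ∧ (G.induce K).Connected ∧ ∀ a ∈ K, ∀ b ∈ S, G.Adj a b → b ∈ K

/-- `K` is a component of `G − X` that is tight at `X`, i.e. `N_G(K) = X`. -/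
def TightCompAt (G : SimpleGraph V) (K X : Set V) : Prop :=
  IsCompOf G K Xᶜ ∧ nbhdSet G K = X

/-- A separation `{A,B}` is tight if `G − (A ∩ B)` has tight components
contained in `A` and in `B`, respectively. -/
def TightSep (G : SimpleGraph V) (A B : Set V) : Prop :=
  (∃ K, TightCompAt G K (A ∩ B) ∧ K ⊆ A) ∧ ∃ K, TightCompAt G K (A ∩ B) ∧ K ⊆ B

/-- `X` is a tight separator: `G − X` has at least two components tight at `X`. -/
def TightSeparator (G : SimpleGraph V) (X : Set V) : Prop :=
  ∃ K₁ K₂, K₁ ≠ K₂ ∧ TightCompAt G K₁ X ∧ TightCompAt G K₂ X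

/-- The set `E_G(S,T)` of edges of `G` with one end in `S` and the other in `T`. -/
def edgesBetween (G : SimpleGraph V) (S T : Set V) : Set (Sym2 V) :=
  {e | ∃ u v, G.Adj u v ∧ e = s(u, v) ∧ u ∈ S ∧ v ∈ T}

/-- `∂X`: the set of edges of `G` with exactly one end in `X`. -/
def edgeBdry (G : SimpleGraph V) (X : Set V) : Set (Sym2 V) :=
  {e | ∃ u v, G.Adj u v ∧ e = s(u, v) ∧ u ∈ X ∧ v ∉ X}

/-- The separator of an oriented separation. -/
def tsSep (s : Set V × Set V) : Set V := s.1 ∩ s.2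

/-- `p` lists the three distinct oriented separations of a ⊤-star. -/
def IsTStar (G : SimpleGraph V) (p : Fin 3 → Set V × Set V) : Prop :=
  Function.Injective p ∧ (∀ i, IsSep G (p i).1 (p i).2) ∧
  (∀ i j, i ≠ j → Disjoint ((p i).1 \ (p i).2) ((p j).1 \ (p j).2)) ∧
  (⋃ i, ((p i).1 \ (p i).2)) = (⋃ i, tsSep (p i))ᶜ ∧
  ∀ i, ∀ v ∈ tsSep (p i), ∃ j, j ≠ i ∧ v ∈ tsSep (p j)

/-- The centre `Z` of a ⊤-star. -/
def tsCentre (p : Fin 3 → Set V × Set V) : Set V := ⋂ i, tsSep (p i)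

/-- The `ij`-link `X_{ij}` of a ⊤-star. -/
def tsLink (p : Fin 3 → Set V × Set V) (i j : Fin 3) : Set V :=
  (tsSep (p i) ∩ tsSep (p j)) \ tsCentre p

/-- The ⊤-star `p` is relevant with base `p 0`. -/
def RelevantTStar (G : SimpleGraph V) (p : Fin 3 → Set V × Set V) : Prop :=
  IsTStar G p ∧ TightSep G (p 0).1 (p 0).2 ∧
  ∀ x ∈ tsLink p 1 2, ∀ i : Fin 3, i ≠ 0 →
    (∃ y ∈ tsLink p 0 i, G.Adj x y) ∨
    ∃ y ∈ tsLink p 0 i ∪ tsCentre p, ∃ K, IsCompOf G K ((p i).1 \ (p i).2) ∧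
      x ∈ nbhdSet G K ∧ y ∈ nbhdSet G K

/-- A bottleneck of order `k` in `G`, encoded as a set of oriented separations
closed under reversal (representing a set of unoriented separations). -/
def IsBottleneck (G : SimpleGraph V) (k : ℕ) (β : Set (Set V × Set V)) : Prop :=
  β.Nonempty ∧ (∀ s ∈ β, (s.2, s.1) ∈ β) ∧
  (∀ s ∈ β, IsSep G s.1 s.2 ∧ TightSep G s.1 s.2 ∧ (s.1 ∩ s.2).encard = k) ∧
  ∀ p : Fin 3 → Set V × Set V, RelevantTStar G p →
    (∀ i, (tsSep (p i)).encard ≤ (k : ℕ∞)) → p 0 ∈ β → p 1 ∈ β ∨ p 2 ∈ β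

/-! ### Tangles -/

/-- A tangle of order `ℓ` in `G`. -/
def IsTangle (G : SimpleGraph V) (ℓ : ℕ) (τ : Set (Set V × Set V)) : Prop :=
  (∀ s ∈ τ, IsSep G s.1 s.2 ∧ (s.1 ∩ s.2).encard < (ℓ : ℕ∞)) ∧
  (∀ A B : Set V, IsSep G A B → (A ∩ B).encard < (ℓ : ℕ∞) → ((A, B) ∈ τ ∨ (B, A) ∈ τ)) ∧
  (∀ A B : Set V, (A, B) ∈ τ → (B, A) ∈ τ → A = B) ∧
  ∀ s₁ ∈ τ, ∀ s₂ ∈ τ, ∀ s₃ ∈ τ,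
    ¬(s₁.1 ∪ s₂.1 ∪ s₃.1 = Set.univ ∧
      ∀ u v : V, G.Adj u v →
        (u ∈ s₁.1 ∧ v ∈ s₁.1) ∨ (u ∈ s₂.1 ∧ v ∈ s₂.1) ∨ (u ∈ s₃.1 ∧ v ∈ s₃.1))

/-- The separation `{A,B}` distinguishes the tangles `τ` and `τ'`. -/
def DistinguishesT (τ τ' : Set (Set V × Set V)) (A B : Set V) : Prop :=
  ((A, B) ∈ τ ∧ (B, A) ∈ τ') ∨ ((B, A) ∈ τ ∧ (A, B) ∈ τ')

/-- The separation `{A,B}` distinguishes the vertex sets `Y` and `Z`. -/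
def DistSets (Y Z A B : Set V) : Prop :=
  (Y ⊆ A ∧ (Y ∩ (A \ B)).Nonempty ∧ Z ⊆ B ∧ (Z ∩ (B \ A)).Nonempty) ∨
  (Y ⊆ B ∧ (Y ∩ (B \ A)).Nonempty ∧ Z ⊆ A ∧ (Z ∩ (A \ B)).Nonempty)

/-! ### The construction of the nested sets `N^k(G)` -/

/-- `X^k`: the union of all `k`-bottlenecks in `G`. -/
def Xk (G : SimpleGraph V) (k : ℕ) : Set (Set V × Set V) :=
  {s | ∃ β, IsBottleneck G k β ∧ s ∈ β}

/-- `x^k(s)`: the number of separations in `X^k` that `s` crosses. -/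
noncomputable def xk (G : SimpleGraph V) (k : ℕ) (s : Set V × Set V) : ℕ :=
  {t ∈ Xk G k | Crosses s t}.ncard

/-- `N^k(G,β)` relative to a previously constructed set `M` of separations:
the elements of `β` nested with `M` that minimise `x^k` among those. -/
def NkOfBeta (G : SimpleGraph V) (M : Set (Set V × Set V)) (k : ℕ)
    (β : Set (Set V × Set V)) : Set (Set V × Set V) :=
  {s ∈ β | (∀ t ∈ M, Nested s t) ∧
    ∀ s' ∈ β, (∀ t ∈ M, Nested s' t) → xk G k s ≤ xk G k s'}

/-- `N^k(G)` relative to a previously constructed set `M`. -/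
def NkStep (G : SimpleGraph V) (M : Set (Set V × Set V)) (k : ℕ) :
    Set (Set V × Set V) :=
  {s | ∃ β, IsBottleneck G k β ∧ s ∈ NkOfBeta G M k β}

/-- `N^{<k}(G) = ⋃_{j<k} N^j(G)`. -/
noncomputable def Nlt (G : SimpleGraph V) : ℕ → Set (Set V × Set V)
  | 0 => ∅
  | k + 1 => Nlt G k ∪ NkStep G (Nlt G k) k

/-- `N^k(G)`. -/
noncomputable def Nk (G : SimpleGraph V) (k : ℕ) : Set (Set V × Set V) :=
  NkStep G (Nlt G k) k

/-- `N(G) = ⋃_k N^k(G)`. -/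
noncomputable def NSet (G : SimpleGraph V) : Set (Set V × Set V) :=
  ⋃ k, Nk G k

/-! ### Walks, local components and local separations -/

/-- An `X`-walk: a walk having precisely its first and last vertex in `X`. -/
def IsXWalk (G : SimpleGraph V) (X : Set V) {u v : V} (W : G.Walk u v) : Prop :=
  u ∈ X ∧ v ∈ X ∧ ∀ w ∈ W.support, w ∈ X → w = u ∨ w = v

/-- An `r`-local `X`-walk: an `X`-walk contained in a cycle of length `≤ r`,
or an `X`-walk consisting of a single `X`-edge. -/
def IsLocalXWalk (G : SimpleGraph V) (r : ℕ) (X : Set V) {u v : V} (W : G.Walk u v) :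
    Prop :=
  IsXWalk G X W ∧
  ((∃ (a : V) (C : G.Walk a a), C.IsCycle ∧ C.length ≤ r ∧ ∀ e ∈ W.edges, e ∈ C.edges) ∨
    W.length = 1)

/-- An `r`-local `X`-path. -/
def IsLocalXPath (G : SimpleGraph V) (r : ℕ) (X : Set V) {u v : V} (W : G.Walk u v) :
    Prop :=
  IsLocalXWalk G r X W ∧ W.IsPath

/-- Walks that are concatenations of `r`-local `X`-paths. -/
inductive ConcatLocalPaths (G : SimpleGraph V) (r : ℕ) (X : Set V) :
    ∀ {u v : V}, G.Walk u v → Prop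
  | single {u v : V} (W : G.Walk u v) (h : IsLocalXPath G r X W) :
      ConcatLocalPaths G r X W
  | comp {u v w : V} (W₁ : G.Walk u v) (W₂ : G.Walk v w)
      (h₁ : IsLocalXPath G r X W₁) (h₂ : ConcatLocalPaths G r X W₂) :
      ConcatLocalPaths G r X (W₁.append W₂)

/-- `W ∈ W_r(X)`: `W` is a concatenation of `r`-local `X`-paths repeating no vertex of `X`. -/
def MemWr (G : SimpleGraph V) (r : ℕ) (X : Set V) {u v : V} (W : G.Walk u v) : Prop :=
  ConcatLocalPaths G r X W ∧ ∀ x ∈ X, ¬W.support.Duplicate x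

/-- `X` is `r`-tomic: any two of its vertices are joined by a walk in `W_r(X)`. -/
def Rtomic (G : SimpleGraph V) (r : ℕ) (X : Set V) : Prop :=
  ∀ x ∈ X, ∀ y ∈ X, x ≠ y → ∃ W : G.Walk x y, MemWr G r X W

/-- One step of the relation generating the `r`-local components at `X`:
`e = f`, or `e` and `f` are the first and last edges of an `r`-local `X`-walk
(both required to lie in `∂X`). -/
def LocalEdgeStep (G : SimpleGraph V) (r : ℕ) (X : Set V) (e f : Sym2 V) : Prop :=
  e ∈ edgeBdry G X ∧ f ∈ edgeBdry G X ∧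
  (e = f ∨ ∃ (u v : V) (W : G.Walk u v), IsLocalXWalk G r X W ∧
      W.edges.head? = some e ∧ W.edges.getLast? = some f)

/-- `F` is an `r`-local component at `X`: an equivalence class of the transitive
closure of `LocalEdgeStep` on `∂X`. -/
def LocalCompAt (G : SimpleGraph V) (r : ℕ) (X : Set V) (F : Set (Sym2 V)) : Prop :=
  ∃ e ∈ edgeBdry G X, F = {f | Relation.ReflTransGen (LocalEdgeStep G r X) e f}

/-- An edge set `F` is tight with respect to `X` if every vertex of `X`
is incident with an edge of `F`. -/
def TightLocalComp (X : Set V) (F : Set (Sym2 V)) : Prop :=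
  ∀ x ∈ X, ∃ e ∈ F, x ∈ e

/-- `X` is a tight `r`-local separator: at least two tight `r`-local components at `X`. -/
def TightLocalSeparator (G : SimpleGraph V) (r : ℕ) (X : Set V) : Prop :=
  ∃ F₁ F₂, F₁ ≠ F₂ ∧ LocalCompAt G r X F₁ ∧ LocalCompAt G r X F₂ ∧
    TightLocalComp X F₁ ∧ TightLocalComp X F₂

/-- `(E₁, X, E₂)` is an (oriented) `r`-local separation of `G`. -/
def IsLocalSep (G : SimpleGraph V) (r : ℕ) (E₁ : Set (Sym2 V)) (X : Set V)
    (E₂ : Set (Sym2 V)) : Prop :=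
  Disjoint E₁ E₂ ∧ E₁ ∪ E₂ = edgeBdry G X ∧
    ∀ F, LocalCompAt G r X F → F ⊆ E₁ ∨ F ⊆ E₂

/-- A tight `r`-local separation: each side includes a tight `r`-local component at `X`. -/
def TightLocalSep (G : SimpleGraph V) (r : ℕ) (E₁ : Set (Sym2 V)) (X : Set V)
    (E₂ : Set (Sym2 V)) : Prop :=
  IsLocalSep G r E₁ X E₂ ∧
  (∃ F, LocalCompAt G r X F ∧ TightLocalComp X F ∧ F ⊆ E₁) ∧
  ∃ F, LocalCompAt G r X F ∧ TightLocalComp X F ∧ F ⊆ E₂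

/-- The oriented `r`-local separation `s_r` induced by the oriented separation
`s = (A₁, A₂)`: its separator is `X = A₁ ∩ A₂`, and its sides are
`E_i = E_G(A_i ∖ X, X)`. -/
def inducedLocal (G : SimpleGraph V) (s : Set V × Set V) :
    Set (Sym2 V) × Set V × Set (Sym2 V) :=
  (edgesBetween G (s.1 \ (s.1 ∩ s.2)) (s.1 ∩ s.2), s.1 ∩ s.2,
    edgesBetween G (s.2 \ (s.1 ∩ s.2)) (s.1 ∩ s.2))

/-- Some cycle of `G` of length `≤ r` alternates between the disjoint sets `X` and `Y`:
it visits four distinct vertices `x, y, x', y'` in this cyclic order with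
`x, x' ∈ X` and `y, y' ∈ Y`. -/
def Alternates (G : SimpleGraph V) (r : ℕ) (X Y : Set V) : Prop :=
  ∃ (a : V) (C : G.Walk a a), C.IsCycle ∧ C.length ≤ r ∧
    ∃ (x y x' y' : V) (l₁ l₂ l₃ l₄ l₅ : List V),
      x ∈ X ∧ x' ∈ X ∧ y ∈ Y ∧ y' ∈ Y ∧ x ≠ x' ∧ y ≠ y' ∧
      C.support = l₁ ++ x :: l₂ ++ y :: l₃ ++ x' :: l₄ ++ y' :: l₅

/-- `X` and `Y` are `r`-coupled. -/
def RCoupled (G : SimpleGraph V) (r : ℕ) (X Y : Set V) : Prop :=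
  (X ∩ Y).Nonempty ∨ (Disjoint X Y ∧ Alternates G r X Y)

/-- The `X`-link for the side `Fi` of an `r`-local separation with separator `Y`:
vertices `x ∈ X ∖ Y` from which some walk in `W_r(X)` visits `Y` with its first
edge in `∂Y` lying in `Fi`. -/
def LocalLink (G : SimpleGraph V) (r : ℕ) (X Y : Set V) (Fi : Set (Sym2 V)) : Set V :=
  {x | x ∈ X \ Y ∧ ∃ (z : V) (W : G.Walk x z), MemWr G r X W ∧
      (∃ y ∈ Y, y ∈ W.support) ∧
      ∃ (e : Sym2 V) (l₁ l₂ : List (Sym2 V)), W.edges = l₁ ++ e :: l₂ ∧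
        e ∈ edgeBdry G Y ∧ e ∈ Fi ∧ ∀ e' ∈ l₁, e' ∉ edgeBdry G Y}

/-- The `r`-local separations `{E₁,X,E₂}` and `{F₁,Y,F₂}` cross. -/
def LocalCrosses (G : SimpleGraph V) (r : ℕ) (E₁ : Set (Sym2 V)) (X : Set V)
    (E₂ : Set (Sym2 V)) (F₁ : Set (Sym2 V)) (Y : Set V) (F₂ : Set (Sym2 V)) : Prop :=
  RCoupled G r X Y ∧ ∀ i j : Bool,
    (LocalLink G r X Y (cond j F₁ F₂)).Nonempty ∨
    (LocalLink G r Y X (cond i E₁ E₂)).Nonempty ∨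
    ((cond i E₁ E₂) ∩ (cond j F₁ F₂) ∩ edgeBdry G (X ∩ Y)).Nonempty

/-- The edge set of a walk, as a set. -/
def walkEdgeSet {G : SimpleGraph V} {a b : V} (W : G.Walk a b) : Set (Sym2 V) :=
  {e | e ∈ W.edges}

/-- The binary cycle space of `G` is generated by the cycles of length `≤ r`:
the edge set of every cycle is a symmetric difference of edge sets of cycles
of length `≤ r`. -/
def CycleSpaceGenShort (G : SimpleGraph V) (r : ℕ) : Prop :=
  ∀ ⦃a : V⦄ (C : G.Walk a a), C.IsCycle →
    ∃ L : List ((b : V) × G.Walk b b),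
      (∀ p ∈ L, p.2.IsCycle ∧ p.2.length ≤ r) ∧
      walkEdgeSet C = L.foldr (fun p E => symmDiff (walkEdgeSet p.2) E) ∅

/-! ### Local ⊤-stars and local bottlenecks -/

/-- `q` lists the three oriented `r`-local separations of an `r`-local ⊤-star. -/
def IsLocalTStar (G : SimpleGraph V) (r : ℕ)
    (q : Fin 3 → Set (Sym2 V) × Set V × Set (Sym2 V)) : Prop :=
  Function.Injective q ∧
  (∀ i, IsLocalSep G r (q i).1 (q i).2.1 (q i).2.2) ∧
  (∀ i j, i ≠ j → Disjoint (q i).1 (q j).1) ∧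
  (⋃ i, (q i).1) = edgeBdry G (⋃ i, (q i).2.1) ∧
  (∀ i, ∀ v ∈ (q i).2.1, ∃ j, j ≠ i ∧ v ∈ (q j).2.1) ∧
  ∀ F, LocalCompAt G r (⋃ i, (q i).2.1) F → ∃ i, F ⊆ (q i).1

/-- The `r`-local ⊤-star `q` is relevant with base `q 0`. -/
def RelevantLocalTStar (G : SimpleGraph V) (r : ℕ)
    (q : Fin 3 → Set (Sym2 V) × Set V × Set (Sym2 V)) : Prop :=
  IsLocalTStar G r q ∧ TightLocalSep G r (q 0).1 (q 0).2.1 (q 0).2.2 ∧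
  ∀ x ∈ ((q 1).2.1 ∩ (q 2).2.1) \ ⋂ j, (q j).2.1, ∀ i : Fin 3, i ≠ 0 →
    (∃ y ∈ ((q 0).2.1 ∩ (q i).2.1) \ ⋂ j, (q j).2.1, G.Adj x y) ∨
    ∃ F, LocalCompAt G r (⋃ j, (q j).2.1) F ∧ F ⊆ (q i).1 ∧
      (∃ e ∈ F, x ∈ e) ∧ ∃ e ∈ F, ∃ y ∈ (q 0).2.1 ∩ (q i).2.1, y ∈ e

/-- An `r`-local bottleneck of order `k` in `G`, encoded as a set of oriented
`r`-local separations closed under reversal. -/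
def IsLocalBottleneck (G : SimpleGraph V) (r k : ℕ)
    (β : Set (Set (Sym2 V) × Set V × Set (Sym2 V))) : Prop :=
  β.Nonempty ∧ (∀ q ∈ β, (q.2.2, q.2.1, q.1) ∈ β) ∧
  (∀ q ∈ β, TightLocalSep G r q.1 q.2.1 q.2.2 ∧ q.2.1.encard = (k : ℕ∞)) ∧
  ∀ p : Fin 3 → Set (Sym2 V) × Set V × Set (Sym2 V), RelevantLocalTStar G r p →
    (∀ i, ((p i).2.1).encard ≤ (k : ℕ∞)) → p 0 ∈ β → p 1 ∈ β ∨ p 2 ∈ β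

section Separations

variable {G : SimpleGraph V}

theorem IsSep.symm {A B : Set V} (h : IsSep G A B) : IsSep G B A :=
  ⟨Set.union_comm A B ▸ h.1, fun b hb a ha hadj => h.2 a ha b hb hadj.symm⟩

theorem IsSep.mem_fst_of_adj {A B : Set V} (h : IsSep G A B) {u v : V} (hu : u ∈ A \ B)
    (hadj : G.Adj u v) : v ∈ A := by
  by_contra hv
  have hvB : v ∈ B := (h.1 ▸ Set.mem_univ v : v ∈ A ∪ B).resolve_left hv
  exact h.2 u hu v ⟨hvB, hv⟩ hadj

theorem IsSep.mem_snd_of_notMem_sdiff {A B : Set V} (h : IsSep G A B) {v : V} (hv : v ∉ A \ B) :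
    v ∈ B := by
  by_contra hvB
  exact hv ⟨(h.1 ▸ Set.mem_univ v : v ∈ A ∪ B).resolve_right hvB, hvB⟩

def regionSep (G : SimpleGraph V) (U : Set V) : Set V × Set V :=
  (U ∪ nbhdSet G U, Uᶜ)

theorem mem_regionSep_fst_of_adj {U : Set V} {u v : V} (hu : u ∈ U) (hadj : G.Adj u v) :
    v ∈ (regionSep G U).1 := by
  by_cases hv : v ∈ U
  · exact Or.inl hv
  · exact Or.inr ⟨hv, u, hu, hadj⟩

theorem isSep_regionSep (U : Set V) : IsSep G (regionSep G U).1 (regionSep G U).2 := by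
  refine ⟨Set.eq_univ_of_forall fun v => ?_, fun a ha b hb hadj => ?_⟩
  · by_cases hv : v ∈ U
    · exact Or.inl (Or.inl hv)
    · exact Or.inr hv
  · have haU : a ∈ U := by simpa [regionSep] using ha.2
    exact hb.2 (mem_regionSep_fst_of_adj haU hadj)

theorem regionSep_inter (U : Set V) :
    (regionSep G U).1 ∩ (regionSep G U).2 = nbhdSet G U := by
  ext v
  simp only [regionSep, Set.mem_inter_iff, Set.mem_union, Set.mem_compl_iff]
  exact ⟨fun ⟨h, hv⟩ => h.resolve_left hv, fun h => ⟨Or.inr h, h.1⟩⟩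

end Separations

section Components

variable {G : SimpleGraph V}

theorem exists_isCompOf_mem {S : Set V} {v : V} (hv : v ∈ S) : ∃ K, IsCompOf G K S ∧ v ∈ K := by
  set K := {u | ∃ T ⊆ S, v ∈ T ∧ u ∈ T ∧ (G.induce T).Connected}
  have hvK : v ∈ K := ⟨{v}, by simpa using hv, rfl, rfl, by simp⟩
  refine ⟨K, ⟨⟨v, hvK⟩, fun u ⟨T, hTS, _, huT, _⟩ => hTS huT, ?_, ?_⟩, hvK⟩
  · refine induce_connected_of_patches v hvK fun {u} ⟨T, _, hvT, huT, hT⟩ => ?_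
    exact ⟨T, fun w hw => ⟨T, ‹_›, hvT, hw, hT⟩, hvT, huT, hT.preconnected _ _⟩
  · rintro a ⟨T, hTS, hvT, haT, hT⟩ b hb hadj
    refine ⟨T ∪ {b}, Set.union_subset hTS (by simpa using hb), Or.inl hvT, Or.inr rfl, ?_⟩
    exact connected_induce_union hT.preconnected (by simp) haT rfl hadj

theorem IsCompOf.mono {K S S' : Set V} (h : IsCompOf G K S) (hSS' : S ⊆ S')
    (hclosed : ∀ a ∈ S, ∀ b ∈ S', G.Adj a b → b ∈ S) : IsCompOf G K S' :=
  ⟨h.1, h.2.1.trans hSS', h.2.2.1, fun a ha b hb hadj =>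
    h.2.2.2 a ha b (hclosed a (h.2.1 ha) b hb hadj) hadj⟩

theorem exists_isCompOf_compl_inter {A B : Set V} (hsep : IsSep G A B) {v : V} (hv : v ∈ A \ B) :
    ∃ K, IsCompOf G K (A ∩ B)ᶜ ∧ v ∈ K ∧ K ⊆ A \ B := by
  obtain ⟨K, hK, hvK⟩ := exists_isCompOf_mem (G := G) hv
  refine ⟨K, hK.mono (fun w hw hwX => hw.2 hwX.2) fun a ha b hb hadj => ?_, hvK, hK.2.1⟩
  exact ⟨hsep.mem_fst_of_adj ha hadj, fun hbB => hb ⟨hsep.mem_fst_of_adj ha hadj, hbB⟩⟩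

theorem nbhdSet_subset_of_forall_isCompOf {X W : Set V}
    (h : ∀ w ∈ W, ∃ K, IsCompOf G K Xᶜ ∧ w ∈ K ∧ K ⊆ W) : nbhdSet G W ⊆ X := by
  rintro v ⟨hvW, u, huW, hadj⟩
  obtain ⟨K, hK, huK, hKW⟩ := h u huW
  by_contra hvX
  exact hvW (hKW (hK.2.2.2 u huK v hvX hadj))

end Components

section Tangles

variable {G : SimpleGraph V} {ℓ : ℕ} {τ : Set (Set V × Set V)}

theorem IsTangle.mem_or_swap_mem (hτ : IsTangle G ℓ τ) {s : Set V × Set V}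
    (hsep : IsSep G s.1 s.2) (hs : (s.1 ∩ s.2).encard < ℓ) : s ∈ τ ∨ s.swap ∈ τ :=
  hτ.2.1 s.1 s.2 hsep hs

/-- The small sides `C, C', C'` would cover `G`. -/
theorem IsTangle.false_of_mem_of_subset (hτ : IsTangle G ℓ τ) {C D C' D' : Set V}
    (h : (C, D) ∈ τ) (h' : (C', D') ∈ τ) (hDC' : D ⊆ C') : False := by
  have hsep : IsSep G C D := (hτ.1 _ h).1
  refine hτ.2.2.2 _ h _ h' _ h' ⟨Set.eq_univ_of_forall fun v => ?_, fun u v hadj => ?_⟩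
  · by_cases hv : v ∈ C
    · exact Or.inl (Or.inl hv)
    · exact Or.inr (hDC' ((hsep.1 ▸ Set.mem_univ v : v ∈ C ∪ D).resolve_left hv))
  · by_cases hu : u ∈ C \ D
    · exact Or.inl ⟨hu.1, hsep.mem_fst_of_adj hu hadj⟩
    by_cases hv : v ∈ C \ D
    · exact Or.inl ⟨hsep.mem_fst_of_adj hv hadj.symm, hv.1⟩
    · exact Or.inr (Or.inl ⟨hDC' (hsep.mem_snd_of_notMem_sdiff hu),
        hDC' (hsep.mem_snd_of_notMem_sdiff hv)⟩)

theorem IsTangle.mem_of_le (hτ : IsTangle G ℓ τ) {C D C' D' : Set V} (h : (C, D) ∈ τ)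
    (hsep : IsSep G C' D') (hord : (C' ∩ D').encard < ℓ) (hC : C' ⊆ C) :
    (C', D') ∈ τ :=
  (hτ.mem_or_swap_mem hsep hord).resolve_right fun h' => hτ.false_of_mem_of_subset h' h hC

theorem IsTangle.regionSep_union_mem (hτ : IsTangle G ℓ τ) {U₁ U₂ : Set V}
    (h₁ : regionSep G U₁ ∈ τ) (h₂ : regionSep G U₂ ∈ τ)
    (hord : (nbhdSet G (U₁ ∪ U₂)).encard < ℓ) : regionSep G (U₁ ∪ U₂) ∈ τ := by
  refine (hτ.mem_or_swap_mem (isSep_regionSep _) (by rwa [regionSep_inter])).resolve_right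
    fun h => hτ.2.2.2 _ h₁ _ h₂ _ h ⟨Set.eq_univ_of_forall fun v => ?_, fun u v hadj => ?_⟩
  · by_cases hv₁ : v ∈ U₁
    · exact Or.inl (Or.inl (Or.inl hv₁))
    by_cases hv₂ : v ∈ U₂
    · exact Or.inl (Or.inr (Or.inl hv₂))
    · exact Or.inr (by simp [regionSep, hv₁, hv₂])
  · by_cases hu₁ : u ∈ U₁ ∨ v ∈ U₁
    · rcases hu₁ with hu | hv
      · exact Or.inl ⟨Or.inl hu, mem_regionSep_fst_of_adj hu hadj⟩
      · exact Or.inl ⟨mem_regionSep_fst_of_adj hv hadj.symm, Or.inl hv⟩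
    by_cases hu₂ : u ∈ U₂ ∨ v ∈ U₂
    · rcases hu₂ with hu | hv
      · exact Or.inr (Or.inl ⟨Or.inl hu, mem_regionSep_fst_of_adj hu hadj⟩)
      · exact Or.inr (Or.inl ⟨mem_regionSep_fst_of_adj hv hadj.symm, Or.inl hv⟩)
    · push Not at hu₁ hu₂
      exact Or.inr (Or.inr (by simp [regionSep, hu₁, hu₂]))

theorem IsTangle.regionSep_biUnion_mem (hτ : IsTangle G ℓ τ) {ι : Type*} {I : Set ι}
    (hI : I.Finite) {U : ι → Set V} (hU : ∀ i ∈ I, regionSep G (U i) ∈ τ)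
    (hord : ∀ J ⊆ I, (nbhdSet G (⋃ i ∈ J, U i)).encard < ℓ) :
    regionSep G (⋃ i ∈ I, U i) ∈ τ := by
  refine Set.Finite.induction_on_subset (motive := fun J _ => regionSep G (⋃ i ∈ J, U i) ∈ τ)
    I hI ?_ fun {a J} ha hJI _ ih => ?_
  · refine (hτ.mem_or_swap_mem (isSep_regionSep _) ?_).resolve_right fun h =>
      hτ.false_of_mem_of_subset h h (by simp [regionSep])
    simpa [regionSep_inter] using hord ∅ (Set.empty_subset I)
  · rw [Set.biUnion_insert]
    exact hτ.regionSep_union_mem (hU a ha) ih (by simpa using hord _ (Set.insert_subset ha hJI))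

end Tangles

section Distinguishing

variable {G : SimpleGraph V} {ℓ ℓ' : ℕ} {τ τ' : Set (Set V × Set V)} {A B : Set V}

theorem distinguishesT_comm : DistinguishesT τ τ' A B ↔ DistinguishesT τ' τ A B := by
  unfold DistinguishesT
  tauto

theorem DistinguishesT.symm (h : DistinguishesT τ τ' A B) : DistinguishesT τ τ' B A :=
  Or.symm h

theorem DistinguishesT.isSep (hτ : IsTangle G ℓ τ) (h : DistinguishesT τ τ' A B) :
    IsSep G A B := by
  rcases h with ⟨h, _⟩ | ⟨h, _⟩
  · exact (hτ.1 _ h).1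
  · exact (hτ.1 _ h).1.symm

theorem DistinguishesT.encard_lt (hτ : IsTangle G ℓ τ) (h : DistinguishesT τ τ' A B) :
    (A ∩ B).encard < ℓ := by
  rcases h with ⟨h, _⟩ | ⟨h, _⟩
  · exact (hτ.1 _ h).2
  · exact Set.inter_comm A B ▸ (hτ.1 _ h).2

theorem regionSep_mem_of_encard_lt (hτ : IsTangle G ℓ τ) (hτ' : IsTangle G ℓ' τ')
    (hAB : (A, B) ∈ τ) (hBA : (B, A) ∈ τ')
    (hmin : ∀ C D, DistinguishesT τ τ' C D → (A ∩ B).encard ≤ (C ∩ D).encard)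
    {U : Set V} (hU : U ⊆ A \ B) (hlt : (nbhdSet G U).encard < (A ∩ B).encard) :
    regionSep G U ∈ τ' := by
  have hsep : IsSep G A B := (hτ.1 _ hAB).1
  have hord : ((regionSep G U).1 ∩ (regionSep G U).2).encard < (A ∩ B).encard := by
    rwa [regionSep_inter]
  have hτU : regionSep G U ∈ τ := by
    refine hτ.mem_of_le hAB (isSep_regionSep _) (hord.trans (hτ.1 _ hAB).2) ?_
    exact Set.union_subset (hU.trans Set.sdiff_subset)
      fun v ⟨_, u, hu, hadj⟩ => hsep.mem_fst_of_adj (hU hu) hadj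
  have hordℓ' : (A ∩ B).encard < ℓ' := Set.inter_comm B A ▸ (hτ'.1 _ hBA).2
  refine (hτ'.mem_or_swap_mem (isSep_regionSep _) (hord.trans hordℓ')).resolve_right fun h => ?_
  exact (hmin _ _ (Or.inl ⟨hτU, h⟩)).not_gt hord

theorem exists_tightCompAt_subset (hτ : IsTangle G ℓ τ) (hτ' : IsTangle G ℓ' τ')
    (hAB : (A, B) ∈ τ) (hBA : (B, A) ∈ τ') (hfin : (A ∩ B).Finite)
    (hmin : ∀ C D, DistinguishesT τ τ' C D → (A ∩ B).encard ≤ (C ∩ D).encard) :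
    ∃ K, TightCompAt G K (A ∩ B) ∧ K ⊆ A := by
  have hsep : IsSep G A B := (hτ.1 _ hAB).1
  have hordℓ' : (A ∩ B).encard < ℓ' := Set.inter_comm B A ▸ (hτ'.1 _ hBA).2
  set X := A ∩ B
  by_contra! hno
  set 𝒦 := {K | IsCompOf G K Xᶜ ∧ K ⊆ A \ B}
  have hmiss : ∀ K ∈ 𝒦, ∃ x ∈ X, x ∉ nbhdSet G K := by
    intro K hK
    by_contra! hall
    have hNK : nbhdSet G K ⊆ X :=
      nbhdSet_subset_of_forall_isCompOf fun w hw => ⟨K, hK.1, hw, subset_rfl⟩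
    exact hno K ⟨hK.1, hNK.antisymm hall⟩ (hK.2.trans Set.sdiff_subset)
  set U : V → Set V := fun x => ⋃₀ {K ∈ 𝒦 | x ∉ nbhdSet G K}
  have hUsub : ∀ x, U x ⊆ A \ B := fun x w ⟨K, hK, hwK⟩ => hK.1.2 hwK
  have hN : ∀ J : Set V, nbhdSet G (⋃ x ∈ J, U x) ⊆ X := by
    refine fun J => nbhdSet_subset_of_forall_isCompOf fun w hw => ?_
    obtain ⟨x, hx, K, hK, hwK⟩ := Set.mem_iUnion₂.mp hw
    exact ⟨K, hK.1.1, hwK,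
      (Set.subset_sUnion_of_mem hK).trans (Set.subset_biUnion_of_mem (u := U) hx)⟩
  have hUτ' : ∀ x ∈ X, regionSep G (U x) ∈ τ' := by
    intro x hx
    have hNx : nbhdSet G (U x) ⊆ X := by simpa using hN {x}
    refine regionSep_mem_of_encard_lt hτ hτ' hAB hBA hmin (hUsub x) ?_
    refine (hfin.subset hNx).encard_lt_encard ⟨hNx, fun hXN => ?_⟩
    obtain ⟨hxU, u, ⟨K, hK, huK⟩, hadj⟩ := hXN hx
    exact hK.2 ⟨fun hxK => hxU ⟨K, hK, hxK⟩, u, huK, hadj⟩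
  have hcover : A \ B ⊆ ⋃ x ∈ X, U x := by
    intro v hv
    obtain ⟨K, hK, hvK, hKsub⟩ := exists_isCompOf_compl_inter hsep hv
    obtain ⟨x, hx, hxK⟩ := hmiss K ⟨hK, hKsub⟩
    exact Set.mem_biUnion hx ⟨K, ⟨⟨hK, hKsub⟩, hxK⟩, hvK⟩
  have hW := hτ'.regionSep_biUnion_mem hfin hUτ'
    fun J _ => (Set.encard_le_encard (hN J)).trans_lt hordℓ'
  exact hτ'.false_of_mem_of_subset hW hBA fun v hv =>
    hsep.mem_snd_of_notMem_sdiff fun hvAB => hv (hcover hvAB)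

theorem tightSep_of_mem (hτ : IsTangle G ℓ τ) (hτ' : IsTangle G ℓ' τ')
    (hAB : (A, B) ∈ τ) (hBA : (B, A) ∈ τ') (hfin : (A ∩ B).Finite)
    (hmin : ∀ C D, DistinguishesT τ τ' C D → (A ∩ B).encard ≤ (C ∩ D).encard) :
    TightSep G A B := by
  refine ⟨exists_tightCompAt_subset hτ hτ' hAB hBA hfin hmin, ?_⟩
  rw [Set.inter_comm A B] at hfin hmin ⊢
  exact exists_tightCompAt_subset hτ' hτ hBA hAB hfin
    fun C D h => hmin C D (distinguishesT_comm.2 h)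

theorem DistinguishesT.tightSep (hτ : IsTangle G ℓ τ) (hτ' : IsTangle G ℓ' τ')
    (h : DistinguishesT τ τ' A B) (hfin : (A ∩ B).Finite)
    (hmin : ∀ C D, DistinguishesT τ τ' C D → (A ∩ B).encard ≤ (C ∩ D).encard) :
    TightSep G A B := by
  rcases h with ⟨hAB, hBA⟩ | ⟨hBA, hAB⟩
  · exact tightSep_of_mem hτ hτ' hAB hBA hfin hmin
  · exact tightSep_of_mem hτ' hτ hAB hBA hfin fun C D h => hmin C D (distinguishesT_comm.1 h)

end Distinguishing

section TStar

variable {G : SimpleGraph V} {p : Fin 3 → Set V × Set V}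

theorem IsTStar.notMem_sdiff_of_mem_tsSep (hp : IsTStar G p) {i j : Fin 3} {v : V}
    (hv : v ∈ tsSep (p i)) : v ∉ (p j).1 \ (p j).2 := fun hvj => by
  have hmem : v ∈ ⋃ m, (p m).1 \ (p m).2 := Set.mem_iUnion.mpr ⟨j, hvj⟩
  rw [hp.2.2.2.1] at hmem
  exact hmem (Set.mem_iUnion.mpr ⟨i, hv⟩)

theorem IsTStar.exists_mem_diff (hp : IsTStar G p) {v : V} (hv : v ∉ ⋃ i, tsSep (p i)) :
    ∃ i, v ∈ (p i).1 \ (p i).2 :=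
  Set.mem_iUnion.mp (hp.2.2.2.1 ▸ hv : v ∈ ⋃ i, (p i).1 \ (p i).2)

theorem IsTStar.fst_subset_snd (hp : IsTStar G p) {i j : Fin 3} (hij : i ≠ j) :
    (p i).1 ⊆ (p j).2 := by
  intro v hv
  refine (hp.2.1 j).mem_snd_of_notMem_sdiff fun hvj => ?_
  by_cases hvi : v ∈ (p i).2
  · exact hp.notMem_sdiff_of_mem_tsSep ⟨hv, hvi⟩ hvj
  · exact Set.disjoint_left.mp (hp.2.2.1 i j hij) ⟨hv, hvi⟩ hvj

theorem IsTStar.exists_mem_fst (hp : IsTStar G p) (v : V) : ∃ i, v ∈ (p i).1 := by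
  by_cases hv : v ∈ ⋃ i, tsSep (p i)
  · obtain ⟨i, hi⟩ := Set.mem_iUnion.mp hv
    exact ⟨i, hi.1⟩
  · obtain ⟨i, hi⟩ := hp.exists_mem_diff hv
    exact ⟨i, hi.1⟩

/-- Each end of an edge between separator vertices lies in two of the three separators, and two
pairs from `Fin 3` always share an index. -/
theorem IsTStar.exists_adj_mem_fst (hp : IsTStar G p) {u v : V} (hadj : G.Adj u v) :
    ∃ i, u ∈ (p i).1 ∧ v ∈ (p i).1 := by
  by_cases hu : ∃ i, u ∈ (p i).1 \ (p i).2
  · obtain ⟨i, hi⟩ := hu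
    exact ⟨i, hi.1, (hp.2.1 i).mem_fst_of_adj hi hadj⟩
  by_cases hv : ∃ i, v ∈ (p i).1 \ (p i).2
  · obtain ⟨i, hi⟩ := hv
    exact ⟨i, (hp.2.1 i).mem_fst_of_adj hi hadj.symm, hi.1⟩
  have hsepar : ∀ w, (¬∃ i, w ∈ (p i).1 \ (p i).2) → ∃ i j, i ≠ j ∧ w ∈ tsSep (p i) ∧
      w ∈ tsSep (p j) := by
    intro w hw
    have hwX : w ∈ ⋃ i, tsSep (p i) := by
      by_contra h
      exact hw (hp.exists_mem_diff h)
    obtain ⟨i, hi⟩ := Set.mem_iUnion.mp hwX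
    obtain ⟨j, hji, hj⟩ := hp.2.2.2.2 i w hi
    exact ⟨i, j, hji.symm, hi, hj⟩
  obtain ⟨i, j, hij, hui, huj⟩ := hsepar u hu
  obtain ⟨i', j', hij', hvi, hvj⟩ := hsepar v hv
  have hcommon : ∀ i j i' j' : Fin 3, i ≠ j → i' ≠ j' → i = i' ∨ i = j' ∨ j = i' ∨ j = j' := by
    decide
  rcases hcommon i j i' j' hij hij' with rfl | rfl | rfl | rfl
  · exact ⟨i, hui.1, hvi.1⟩
  · exact ⟨i, hui.1, hvj.1⟩
  · exact ⟨j, huj.1, hvi.1⟩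
  · exact ⟨j, huj.1, hvj.1⟩

theorem IsTangle.not_forall_mem_of_isTStar {ℓ : ℕ} {τ : Set (Set V × Set V)}
    (hτ : IsTangle G ℓ τ) (hp : IsTStar G p) : ¬∀ i, p i ∈ τ := by
  intro hmem
  have hfst : ∀ {v : V} {i : Fin 3}, v ∈ (p i).1 →
      v ∈ (p 0).1 ∨ v ∈ (p 1).1 ∨ v ∈ (p 2).1 := by
    intro v i hv
    fin_cases i <;> simp_all
  refine hτ.2.2.2 _ (hmem 0) _ (hmem 1) _ (hmem 2)
    ⟨Set.eq_univ_of_forall fun v => ?_, fun u v hadj => ?_⟩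
  · obtain ⟨i, hi⟩ := hp.exists_mem_fst v
    rcases hfst hi with h | h | h
    · exact Or.inl (Or.inl h)
    · exact Or.inl (Or.inr h)
    · exact Or.inr h
  · obtain ⟨i, hu, hv⟩ := hp.exists_adj_mem_fst hadj
    fin_cases i
    · exact Or.inl ⟨hu, hv⟩
    · exact Or.inr (Or.inl ⟨hu, hv⟩)
    · exact Or.inr (Or.inr ⟨hu, hv⟩)

theorem IsTStar.distinguishesT_of_mem {ℓ ℓ' : ℕ} {τ τ' : Set (Set V × Set V)}
    (hτ : IsTangle G ℓ τ) (hτ' : IsTangle G ℓ' τ') (hp : IsTStar G p)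
    (hord : ∀ i, (tsSep (p i)).encard < ℓ) (hord' : ∀ i, (tsSep (p i)).encard < ℓ')
    (h₀ : p 0 ∈ τ) (h₀' : (p 0).swap ∈ τ') :
    DistinguishesT τ τ' (p 1).1 (p 1).2 ∨ DistinguishesT τ τ' (p 2).1 (p 2).2 := by
  have hswap : ∀ j, j ≠ 0 → (p j).swap ∈ τ → DistinguishesT τ τ' (p j).1 (p j).2 := by
    intro j hj hjτ
    refine Or.inr ⟨hjτ, (hτ'.mem_or_swap_mem (hp.2.1 j) (hord' j)).resolve_right fun hjτ' => ?_⟩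
    exact hτ'.false_of_mem_of_subset h₀' hjτ' (hp.fst_subset_snd hj.symm)
  by_cases h₁ : p 1 ∈ τ
  · by_cases h₂ : p 2 ∈ τ
    · exact absurd (fun i => by fin_cases i <;> assumption) (hτ.not_forall_mem_of_isTStar hp)
    · exact Or.inr (hswap 2 (by decide) ((hτ.mem_or_swap_mem (hp.2.1 2) (hord 2)).resolve_left h₂))
  · exact Or.inl (hswap 1 (by decide) ((hτ.mem_or_swap_mem (hp.2.1 1) (hord 1)).resolve_left h₁))

theorem IsTStar.distinguishesT {ℓ ℓ' : ℕ} {τ τ' : Set (Set V × Set V)}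
    (hτ : IsTangle G ℓ τ) (hτ' : IsTangle G ℓ' τ') (hp : IsTStar G p)
    (hord : ∀ i, (tsSep (p i)).encard < ℓ) (hord' : ∀ i, (tsSep (p i)).encard < ℓ')
    (h₀ : DistinguishesT τ τ' (p 0).1 (p 0).2) :
    DistinguishesT τ τ' (p 1).1 (p 1).2 ∨ DistinguishesT τ τ' (p 2).1 (p 2).2 := by
  rcases h₀ with ⟨h₀, h₀'⟩ | ⟨h₀', h₀⟩
  · exact hp.distinguishesT_of_mem hτ hτ' hord hord' h₀ h₀'
  · simpa only [distinguishesT_comm (τ := τ')] using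
      hp.distinguishesT_of_mem hτ' hτ hord' hord h₀ h₀'

end TStar

/-- The set of separations efficiently distinguishing two
distinguishable tangles `τ, τ'` is a bottleneck of order `k`, where `k` is the
minimum order of a separation distinguishing `τ` and `τ'`. -/
theorem statement3 {V : Type*} (G : SimpleGraph V) (ℓ ℓ' : ℕ)
    (τ τ' : Set (Set V × Set V))
    (hτ : IsTangle G ℓ τ) (hτ' : IsTangle G ℓ' τ') (k : ℕ)
    (hex : ∃ A B : Set V, DistinguishesT τ τ' A B ∧ (A ∩ B).encard = (k : ℕ∞))
    (hmin : ∀ A B : Set V, DistinguishesT τ τ' A B → (k : ℕ∞) ≤ (A ∩ B).encard) :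
    IsBottleneck G k
      {s : Set V × Set V | IsSep G s.1 s.2 ∧ DistinguishesT τ τ' s.1 s.2 ∧
        ∀ C D : Set V, DistinguishesT τ τ' C D →
          (s.1 ∩ s.2).encard ≤ (C ∩ D).encard} := by
  obtain ⟨A₀, B₀, hd₀, hk₀⟩ := hex
  have horder : ∀ s : Set V × Set V, DistinguishesT τ τ' s.1 s.2 →
      (∀ C D, DistinguishesT τ τ' C D → (s.1 ∩ s.2).encard ≤ (C ∩ D).encard) →
      (s.1 ∩ s.2).encard = k :=
    fun s hs hsmin => le_antisymm (hk₀ ▸ hsmin A₀ B₀ hd₀) (hmin _ _ hs)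
  refine ⟨⟨(A₀, B₀), hd₀.isSep hτ, hd₀, fun C D h => hk₀ ▸ hmin C D h⟩, ?_, ?_, ?_⟩
  · rintro s ⟨hsep, hs, hsmin⟩
    exact ⟨hsep.symm, hs.symm, by simpa only [Set.inter_comm s.2] using hsmin⟩
  · rintro s ⟨hsep, hs, hsmin⟩
    have hk := horder s hs hsmin
    exact ⟨hsep, hs.tightSep hτ hτ' (Set.finite_of_encard_eq_coe hk) hsmin, hk⟩
  · intro p hrel hord ⟨_, h₀, h₀min⟩
    have hk := horder _ h₀ h₀min
    have hordℓ : ∀ i, (tsSep (p i)).encard < ℓ := fun i => (hord i).trans_lt (hk ▸ h₀.encard_lt hτ)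
    have hordℓ' : ∀ i, (tsSep (p i)).encard < ℓ' :=
      fun i => (hord i).trans_lt (hk ▸ (distinguishesT_comm.1 h₀).encard_lt hτ')
    rcases hrel.1.distinguishesT hτ hτ' hordℓ hordℓ' h₀ with h | h
    · exact Or.inl ⟨hrel.1.2.1 1, h, fun C D hCD => (hord 1).trans (hmin C D hCD)⟩
    · exact Or.inr ⟨hrel.1.2.1 2, h, fun C D hCD => (hord 2).trans (hmin C D hCD)⟩

end LS
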